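/- Let G, ‖·‖, σ₀ be as in the gauge setup and Γ ⊂ G a discrete subgroup. If f : G → ℂ is continuous and satisfies |f(g)| ≤ C·‖g‖^{-σ} for some σ > σ₀, then the Poincaré series Pé_f(g) = ∑_{γ ∈ Γ} f(γg) converges absolutely, uniformly on compact subsets of G, and |Pé_f(g)| ≪ ‖g‖^{σ} for all g. -/

import Mathlib

/-!
Since `Γ` is discrete, a small neighbourhood `W` of `1` has pairwise disjoint translates `γW`.
On `γW` the gauge is at most `M‖γ‖` with `M = sup_W ‖·‖`, so `‖γ‖^{-σ} μ(W) ≪ ∫_{γW} ‖g‖^{-σ} dg`,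
and summing over `γ` bounds `∑_γ ‖γ‖^{-σ}` by `∫_G ‖g‖^{-σ} dg < ∞`. Submultiplicativity gives
`‖γg‖^{-σ} ≤ ‖g‖^σ ‖γ‖^{-σ}`, a majorant of the Poincaré series that is uniform for `g` in a compact
set (Weierstrass M-test) and yields the growth bound.
-/

open MeasureTheory Filter Function Topology
open scoped Pointwise ENNReal

theorem Subgroup.exists_mem_nhds_one_pairwise_disjoint_smul {G : Type*} [Group G]
    [TopologicalSpace G] [IsTopologicalGroup G] (Γ : Subgroup G) [DiscreteTopology Γ] :
    ∃ V ∈ 𝓝 (1 : G), Pairwise (Disjoint on fun γ : Γ => (γ : G) • V) := by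
  obtain ⟨U, hU, hUΓ⟩ := isOpen_induced_iff.mp (isOpen_discrete ({1} : Set Γ))
  obtain ⟨V, hV, hVU⟩ := exists_nhds_split_inv (hU.mem_nhds (by simpa using hUΓ.ge rfl))
  refine ⟨V, hV, fun γ γ' hne => Set.disjoint_left.mpr ?_⟩
  rintro _ ⟨v, hv, rfl⟩ ⟨w, hw, hwv⟩
  have hγ : γ'⁻¹ * γ ∈ Subtype.val ⁻¹' U := by
    have : (γ' : G)⁻¹ * γ = w / v := by
      simp only [smul_eq_mul] at hwv
      rw [div_eq_mul_inv, eq_mul_inv_iff_mul_eq, mul_assoc, ← hwv, inv_mul_cancel_left]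
    simpa [this] using hVU w hw v hv
  rw [hUΓ] at hγ
  exact hne (inv_mul_eq_one.mp hγ).symm

theorem summable_of_le_setIntegral_of_pairwise_disjoint {α ι : Type*} [MeasurableSpace α]
    {μ : Measure α} {φ : α → ℝ} (hφ : Integrable φ μ) (hφ0 : 0 ≤ φ) {S : ι → Set α}
    (hS : ∀ i, MeasurableSet (S i)) (hdisj : Pairwise (Disjoint on S)) {m : ℝ≥0∞}
    (hSm : ∀ i, μ (S i) = m) (hm0 : m ≠ 0) (hmtop : m ≠ ⊤) {ψ : ι → ℝ} (hψ0 : 0 ≤ ψ)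
    (hψ : ∀ i, ∀ x ∈ S i, ψ i ≤ φ x) : Summable ψ := by
  have hm : 0 < m.toReal := ENNReal.toReal_pos hm0 hmtop
  refine summable_of_sum_le (c := (∫ x, φ x ∂μ) / m.toReal) hψ0 fun u => ?_
  rw [le_div_iff₀ hm]
  calc (∑ i ∈ u, ψ i) * m.toReal
      = ∑ i ∈ u, ψ i * μ.real (S i) := by simp [Measure.real, hSm, Finset.sum_mul]
    _ ≤ ∑ i ∈ u, ∫ x in S i, φ x ∂μ := Finset.sum_le_sum fun i _ =>
        setIntegral_ge_of_const_le_real (hS i) (hSm i ▸ hmtop) (hψ i) hφ.integrableOn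
    _ = ∫ x in ⋃ i ∈ u, S i, φ x ∂μ :=
        (integral_biUnion_finset u (fun i _ => hS i) (fun i _ j _ hij => hdisj hij)
          fun i _ => hφ.integrableOn).symm
    _ ≤ ∫ x, φ x ∂μ := setIntegral_le_integral hφ (Eventually.of_forall hφ0)

theorem Subgroup.summable_rpow_neg_of_integrable {G : Type*} [Group G] [TopologicalSpace G]
    [IsTopologicalGroup G] [LocallyCompactSpace G] [MeasurableSpace G] [BorelSpace G]
    (μ : Measure G) [μ.IsHaarMeasure] (Γ : Subgroup G) [DiscreteTopology Γ] {N : G → ℝ}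
    (hNcont : Continuous N) (hNpos : ∀ g, 0 < N g) (hNsub : ∀ g h, N (g * h) ≤ N g * N h)
    {σ : ℝ} (hσ : 0 ≤ σ) (hint : Integrable (fun g => N g ^ (-σ)) μ) :
    Summable fun γ : Γ => N γ ^ (-σ) := by
  obtain ⟨V, hV, hdisj⟩ := Γ.exists_mem_nhds_one_pairwise_disjoint_smul
  obtain ⟨K, hK, hKV, hKc⟩ := local_compact_nhds hV
  obtain ⟨M, hM⟩ := hKc.bddAbove_image hNcont.continuousOn
  have hMpos : 0 < M := (hNpos 1).trans_le (hM ⟨1, mem_of_mem_nhds hK, rfl⟩)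
  set W := interior K
  have hW0 : μ W ≠ 0 := (isOpen_interior.measure_pos μ ⟨1, mem_interior_iff_mem_nhds.mpr hK⟩).ne'
  have hWtop : μ W ≠ ⊤ := (measure_mono interior_subset |>.trans_lt hKc.measure_lt_top).ne
  have hlow : ∀ (γ : Γ), ∀ x ∈ (γ : G) • W, (M * N γ) ^ (-σ) ≤ N x ^ (-σ) := by
    rintro γ _ ⟨w, hw, rfl⟩
    refine Real.rpow_le_rpow_of_nonpos (hNpos _) ?_ (neg_nonpos.mpr hσ)
    calc N ((γ : G) • w) ≤ N γ * N w := hNsub _ _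
      _ ≤ M * N γ := by
        rw [mul_comm]
        exact mul_le_mul_of_nonneg_right (hM ⟨w, interior_subset hw, rfl⟩) (hNpos _).le
  have hWV : W ⊆ V := interior_subset.trans hKV
  have hscaled := summable_of_le_setIntegral_of_pairwise_disjoint
    (S := fun γ : Γ => (γ : G) • W) hint
    (fun g => Real.rpow_nonneg (hNpos g).le _)
    (fun γ => isOpen_interior.measurableSet.const_smul (γ : G))
    (hdisj.mono fun _ _ => Disjoint.mono (Set.smul_set_mono hWV) (Set.smul_set_mono hWV))
    (fun γ => measure_smul μ (γ : G) W) hW0 hWtop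
    (fun γ => Real.rpow_nonneg (mul_pos hMpos (hNpos γ)).le _) hlow
  simp_rw [Real.mul_rpow hMpos.le (hNpos _).le] at hscaled
  exact (summable_mul_left_iff (Real.rpow_pos_of_pos hMpos _).ne').mp hscaled

theorem rpow_neg_mul_le_rpow_mul_rpow_neg {G : Type*} [Group G] {N : G → ℝ}
    (hNpos : ∀ g, 0 < N g) (hNinv : ∀ g, N g⁻¹ = N g) (hNsub : ∀ g h, N (g * h) ≤ N g * N h)
    {σ : ℝ} (hσ : 0 ≤ σ) (x g : G) : N (x * g) ^ (-σ) ≤ N g ^ σ * N x ^ (-σ) := by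
  have hx : N x ≤ N (x * g) * N g := by
    simpa [hNinv] using hNsub (x * g) g⁻¹
  calc N (x * g) ^ (-σ) ≤ (N x / N g) ^ (-σ) :=
        Real.rpow_le_rpow_of_nonpos (div_pos (hNpos _) (hNpos _))
          ((div_le_iff₀ (hNpos g)).mpr hx) (neg_nonpos.mpr hσ)
    _ = N g ^ σ * N x ^ (-σ) := by
        rw [Real.div_rpow (hNpos _).le (hNpos _).le, Real.rpow_neg (hNpos g).le, div_inv_eq_mul,
          mul_comm]

theorem poincare_series_convergence_general
    {G : Type*} [Group G] [TopologicalSpace G] [IsTopologicalGroup G]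
    [LocallyCompactSpace G]
    [MeasurableSpace G] [BorelSpace G]
    (μ : Measure G) [μ.IsHaarMeasure]
    (N : G → ℝ) (hNcont : Continuous N)
    (hNge : ∀ g, 1 ≤ N g) (hNinv : ∀ g, N g⁻¹ = N g)
    (hNsub : ∀ g h, N (g * h) ≤ N g * N h)
    (σ₀ : ℝ) (hσ₀ : 0 < σ₀)
    (hint : ∀ s : ℝ, σ₀ < s → Integrable (fun g => (N g) ^ (-s)) μ)
    (Γ : Subgroup G) (hΓ : DiscreteTopology Γ)
    (f : G → ℂ)
    (σ : ℝ) (hσ : σ₀ < σ) (C : ℝ) (hC : 0 < C)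
    (hbound : ∀ g, ‖f g‖ ≤ C * (N g) ^ (-σ)) :
    (∀ g : G, Summable (fun γ : Γ => ‖f ((γ : G) * g)‖)) ∧
    (∀ K : Set G, IsCompact K →
      TendstoUniformlyOn (fun (s : Finset Γ) (g : G) => ∑ γ ∈ s, f ((γ : G) * g))
        (fun g => ∑' γ : Γ, f ((γ : G) * g)) atTop K) ∧
    (∃ C' : ℝ, 0 < C' ∧ ∀ g : G, ‖∑' γ : Γ, f ((γ : G) * g)‖ ≤ C' * (N g) ^ σ) := by
  have hσ0 : 0 ≤ σ := (hσ₀.trans hσ).le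
  have hNpos : ∀ g, 0 < N g := fun g => one_pos.trans_le (hNge g)
  have hsum : Summable fun γ : Γ => N γ ^ (-σ) :=
    Γ.summable_rpow_neg_of_integrable μ hNcont hNpos hNsub hσ0 (hint σ hσ)
  have hterm (g : G) (γ : Γ) : ‖f (γ * g)‖ ≤ C * N g ^ σ * N γ ^ (-σ) := by
    rw [mul_assoc]
    exact (hbound _).trans (mul_le_mul_of_nonneg_left
      (rpow_neg_mul_le_rpow_mul_rpow_neg hNpos hNinv hNsub hσ0 _ _) hC.le)
  have habs (g : G) : Summable fun γ : Γ => ‖f (γ * g)‖ :=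
    .of_nonneg_of_le (fun _ => norm_nonneg _) (hterm g) (hsum.mul_left _)
  refine ⟨habs, fun K hK => ?_, ?_⟩
  · obtain ⟨R, hR⟩ := hK.bddAbove_image hNcont.continuousOn
    refine tendstoUniformlyOn_tsum (hsum.mul_left (C * R ^ σ)) fun γ g hg => (hterm g γ).trans ?_
    gcongr
    exacts [Real.rpow_nonneg (hNpos γ).le _, (hNpos g).le, hR ⟨g, hg, rfl⟩]
  · refine ⟨C * ∑' γ : Γ, N γ ^ (-σ), mul_pos hC (hsum.tsum_pos
      (fun γ => Real.rpow_nonneg (hNpos γ).le _) 1 (Real.rpow_pos_of_pos (hNpos 1) _)), fun g => ?_⟩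
    calc ‖∑' γ : Γ, f (γ * g)‖ ≤ ∑' γ : Γ, ‖f (γ * g)‖ := norm_tsum_le_tsum_norm (habs g)
      _ ≤ ∑' γ : Γ, C * N g ^ σ * N γ ^ (-σ) := (habs g).tsum_le_tsum (hterm g) (hsum.mul_left _)
      _ = C * (∑' γ : Γ, N γ ^ (-σ)) * N g ^ σ := by rw [tsum_mul_left]; ring

/-- if `|f(g)| ≤ C‖g‖^{-σ}` for some `σ > σ₀`, then the Poincaré series
`Pé_f(g) = ∑_{γ∈Γ} f(γg)` converges absolutely, uniformly on compacta,
and `|Pé_f(g)| ≪ ‖g‖^{σ}`. -/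
theorem poincare_series_convergence
    {G : Type*} [Group G] [TopologicalSpace G] [IsTopologicalGroup G]
    [LocallyCompactSpace G] [T2Space G] [SecondCountableTopology G]
    [MeasurableSpace G] [BorelSpace G]
    (μ : Measure G) [μ.IsHaarMeasure] [μ.IsMulRightInvariant]
    (N : G → ℝ) (hNcont : Continuous N)
    (hN1 : N 1 = 1) (hNge : ∀ g, 1 ≤ N g) (hNinv : ∀ g, N g⁻¹ = N g)
    (hNsub : ∀ g h, N (g * h) ≤ N g * N h)
    (σ₀ : ℝ) (hσ₀ : 0 < σ₀)
    (hint : ∀ s : ℝ, σ₀ < s → Integrable (fun g => (N g) ^ (-s)) μ)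
    (Γ : Subgroup G) (hΓ : DiscreteTopology Γ)
    (f : G → ℂ) (hf : Continuous f)
    (σ : ℝ) (hσ : σ₀ < σ) (C : ℝ) (hC : 0 < C)
    (hbound : ∀ g, ‖f g‖ ≤ C * (N g) ^ (-σ)) :
    (∀ g : G, Summable (fun γ : Γ => ‖f ((γ : G) * g)‖)) ∧
    (∀ K : Set G, IsCompact K →
      TendstoUniformlyOn (fun (s : Finset Γ) (g : G) => ∑ γ ∈ s, f ((γ : G) * g))
        (fun g => ∑' γ : Γ, f ((γ : G) * g)) atTop K) ∧
    (∃ C' : ℝ, 0 < C' ∧ ∀ g : G, ‖∑' γ : Γ, f ((γ : G) * g)‖ ≤ C' * (N g) ^ σ) :=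
  poincare_series_convergence_general μ N hNcont hNge hNinv hNsub σ₀ hσ₀ hint Γ hΓ f σ hσ C hC
    hbound
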